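/- With respect to the normalized basis e_s = x^{𝒩 + s n} y^{ℳ − s m} / √C_s (s = 0,…,r), where C_s = Π_l (𝒩_l + n_l s)! · Π_k (ℳ_k − m_k s)!, the matrix of H_1 = y^m ∂_x^n + x^n ∂_y^m is tridiagonal with zero diagonal, symmetric, and its off-diagonal entries are (H_1)_{s+1,s} = (Π_{l=1}^N Π_{j=0}^{n_l−1} (𝒩_l + n_l s + j + 1) · Π_{k=1}^M Π_{i=0}^{m_k−1} (ℳ_k − m_k s − i))^{1/2} for s = 0,…,r−1. -/

import Mathlib

open MvPolynomial

noncomputable def Dxn {N M : ℕ} (n : Fin N → ℕ) :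
    Module.End ℝ (MvPolynomial (Fin N ⊕ Fin M) ℝ) :=
  (List.ofFn fun l : Fin N =>
    ((pderiv (Sum.inl l)).toLinearMap : Module.End ℝ (MvPolynomial (Fin N ⊕ Fin M) ℝ)) ^ n l).prod

noncomputable def Dym {N M : ℕ} (m : Fin M → ℕ) :
    Module.End ℝ (MvPolynomial (Fin N ⊕ Fin M) ℝ) :=
  (List.ofFn fun k : Fin M =>
    ((pderiv (Sum.inr k)).toLinearMap : Module.End ℝ (MvPolynomial (Fin N ⊕ Fin M) ℝ)) ^ m k).prod

/-- `H₁ = y^m ∂_x^n + x^n ∂_y^m`. -/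
noncomputable def H1 {N M : ℕ} (n : Fin N → ℕ) (m : Fin M → ℕ) :
    Module.End ℝ (MvPolynomial (Fin N ⊕ Fin M) ℝ) :=
  (LinearMap.mulLeft ℝ (∏ k : Fin M, X (Sum.inr k) ^ m k)).comp (Dxn n) +
    (LinearMap.mulLeft ℝ (∏ l : Fin N, X (Sum.inl l) ^ n l)).comp (Dym m)

/-- The monomial `x^i y^j`. -/
noncomputable def mon {N M : ℕ} (i : Fin N → ℕ) (j : Fin M → ℕ) :
    MvPolynomial (Fin N ⊕ Fin M) ℝ :=
  monomial (Finsupp.equivFunOnFinite.symm (Sum.elim i j)) 1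

/-- The normalization constant `C_s = Π_l (𝒩_l + n_l s)! · Π_k (ℳ_k - m_k s)!`. -/
def normC {N M : ℕ} (n : Fin N → ℕ) (m : Fin M → ℕ) (𝒩 : Fin N → ℕ) (ℳ : Fin M → ℕ)
    (s : ℕ) : ℕ :=
  (∏ l : Fin N, Nat.factorial (𝒩 l + n l * s)) * ∏ k : Fin M, Nat.factorial (ℳ k - m k * s)

/-- The normalized basis vector `e_s = x^{𝒩 + s n} y^{ℳ - s m} / √C_s`. -/
noncomputable def basisE {N M : ℕ} (n : Fin N → ℕ) (m : Fin M → ℕ) (𝒩 : Fin N → ℕ)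
    (ℳ : Fin M → ℕ) (s : ℕ) : MvPolynomial (Fin N ⊕ Fin M) ℝ :=
  (Real.sqrt (normC n m 𝒩 ℳ s))⁻¹ • mon (fun l => 𝒩 l + s * n l) fun k => ℳ k - s * m k

/-- The off-diagonal matrix entry
`(H₁)_{s+1,s} = (Π_l Π_{j<n_l} (𝒩_l + n_l s + j + 1) · Π_k Π_{i<m_k} (ℳ_k - m_k s - i))^½`. -/
noncomputable def offd {N M : ℕ} (n : Fin N → ℕ) (m : Fin M → ℕ) (𝒩 : Fin N → ℕ)
    (ℳ : Fin M → ℕ) (s : ℕ) : ℝ :=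
  Real.sqrt
    ((∏ l : Fin N, ∏ j ∈ Finset.range (n l), (𝒩 l + n l * s + j + 1)) *
      ∏ k : Fin M, ∏ i ∈ Finset.range (m k), (ℳ k - m k * s - i) : ℕ)

/-!
On monomials `H₁ (x^a y^b) = (a)_n x^(a-n) y^(b+m) + (b)_m x^(a+n) y^(b-m)`, where
`(a)_n = ∏_l a_l (a_l - 1) ⋯ (a_l - n_l + 1)` is a falling factorial, so `H₁` sends `e_s` into the
span of `e_(s-1)` and `e_(s+1)`. The lowering coefficient vanishes at `s = 0` because some
`𝒩_l < n_l`, the raising one at `s = r` because some `ℳ_k - r m_k < m_k`. Finally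
`C_(s+1) (ℳ - s m)_m = C_s (𝒩 + (s+1) n)_n`, so after normalisation both matrix entries between
`e_s` and `e_(s+1)` equal `√((𝒩 + (s+1) n)_n (ℳ - s m)_m)`.
-/

open scoped Nat

namespace MvPolynomial

variable {R σ : Type*} [CommSemiring R]

theorem pderiv_pow_monomial (a : σ) (k : ℕ) (s : σ →₀ ℕ) (c : R) :
    ((pderiv a).toLinearMap ^ k : Module.End R (MvPolynomial σ R)) (monomial s c) =
      monomial (s - Finsupp.single a k) (c * (s a).descFactorial k) := by
  induction k with
  | zero => simp
  | succ k ih =>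
    rw [pow_succ', Module.End.mul_apply, ih, Derivation.coeFn_coe, pderiv_monomial,
      tsub_tsub, ← Finsupp.single_add, Finsupp.tsub_apply, Finsupp.single_eq_same,
      Nat.descFactorial_succ]
    congr 1
    push_cast
    ring

theorem list_prod_pderiv_pow_monomial {ι : Type*} {g : ι → σ} (hg : Function.Injective g)
    (e : ι → ℕ) {L : List ι} (hL : L.Nodup) (s : σ →₀ ℕ) (c : R) :
    (L.map fun i => ((pderiv (g i)).toLinearMap ^ e i : Module.End R (MvPolynomial σ R))).prod
        (monomial s c) =
      monomial (s - (L.map fun i => Finsupp.single (g i) (e i)).sum)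
        (c * (L.map fun i => (s (g i)).descFactorial (e i)).prod) := by
  induction L generalizing s c with
  | nil => simp
  | cons i L ih =>
    obtain ⟨hi, hL⟩ := List.nodup_cons.1 hL
    have hgi : (L.map fun j => Finsupp.single (g j) (e j)).sum (g i) = 0 := by
      rw [← Finsupp.applyAddHom_apply, map_list_sum, List.map_map]
      refine List.sum_eq_zero fun x hx => ?_
      obtain ⟨j, hj, rfl⟩ := List.mem_map.1 hx
      exact Finsupp.single_eq_of_ne (hg.ne fun h => hi (h ▸ hj))
    rw [List.map_cons, List.prod_cons, Module.End.mul_apply, ih hL, pderiv_pow_monomial,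
      Finsupp.tsub_apply, hgi, Nat.sub_zero, tsub_tsub, add_comm]
    simp only [List.map_cons, List.sum_cons, List.prod_cons]
    congr 1
    push_cast
    ring

end MvPolynomial

section
variable {N M : ℕ}

theorem mon_mul (i i' : Fin N → ℕ) (j j' : Fin M → ℕ) :
    mon i j * mon i' j' = mon (i + i') (j + j') := by
  rw [mon, mon, mon, monomial_mul, one_mul]
  exact congrArg (monomial · 1) (by ext (l | k) <;> rfl)

theorem prod_X_inl_pow_eq_mon (n : Fin N → ℕ) :
    ∏ l, (X (Sum.inl l) : MvPolynomial (Fin N ⊕ Fin M) ℝ) ^ n l = mon n 0 := by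
  rw [mon, monomial_eq, C_1, one_mul, Finsupp.prod_fintype _ _ (by simp), Fintype.prod_sum_type]
  simp

theorem prod_X_inr_pow_eq_mon (m : Fin M → ℕ) :
    ∏ k, (X (Sum.inr k) : MvPolynomial (Fin N ⊕ Fin M) ℝ) ^ m k = mon 0 m := by
  rw [mon, monomial_eq, C_1, one_mul, Finsupp.prod_fintype _ _ (by simp), Fintype.prod_sum_type]
  simp

theorem Dxn_mon (n i : Fin N → ℕ) (j : Fin M → ℕ) :
    Dxn n (mon i j) = ((∏ l, (i l).descFactorial (n l) : ℕ) : ℝ) • mon (i - n) j := by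
  rw [Dxn, List.ofFn_eq_map, mon,
    list_prod_pderiv_pow_monomial Sum.inl_injective n (List.nodup_finRange N), mon,
    smul_monomial, smul_eq_mul, mul_one, one_mul, ← Fin.sum_univ_def, ← Fin.prod_univ_def]
  congr 2
  ext (l | k) <;> simp [Finsupp.single_apply]

theorem Dym_mon (m : Fin M → ℕ) (i : Fin N → ℕ) (j : Fin M → ℕ) :
    Dym m (mon i j) = ((∏ k, (j k).descFactorial (m k) : ℕ) : ℝ) • mon i (j - m) := by
  rw [Dym, List.ofFn_eq_map, mon,
    list_prod_pderiv_pow_monomial Sum.inr_injective m (List.nodup_finRange M), mon,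
    smul_monomial, smul_eq_mul, mul_one, one_mul, ← Fin.sum_univ_def, ← Fin.prod_univ_def]
  congr 2
  ext (l | k) <;> simp [Finsupp.single_apply]

theorem H1_mon (n i : Fin N → ℕ) (m j : Fin M → ℕ) :
    H1 n m (mon i j) =
      ((∏ l, (i l).descFactorial (n l) : ℕ) : ℝ) • mon (i - n) (j + m) +
        ((∏ k, (j k).descFactorial (m k) : ℕ) : ℝ) • mon (i + n) (j - m) := by
  rw [H1, LinearMap.add_apply, LinearMap.comp_apply, LinearMap.comp_apply,
    LinearMap.mulLeft_apply, LinearMap.mulLeft_apply, Dxn_mon, Dym_mon, prod_X_inl_pow_eq_mon,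
    prod_X_inr_pow_eq_mon, mul_smul_comm, mul_smul_comm, mon_mul, mon_mul, zero_add, zero_add,
    add_comm m, add_comm n]

end

theorem inv_sqrt_mul_eq_sqrt_mul_mul_inv_sqrt {a b A B : ℝ} (ha : 0 < a) (hb : 0 < b)
    (hA : 0 ≤ A) (h : b * A = a * B) : (√a)⁻¹ * A = √(B * A) * (√b)⁻¹ := by
  have hBA : B * A = (A * √b / √a) ^ 2 := by
    rw [div_pow, mul_pow, Real.sq_sqrt ha.le, Real.sq_sqrt hb.le]
    field_simp
    linear_combination (-A) * h
  rw [hBA, Real.sqrt_sq (by positivity)]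
  field_simp

theorem Nat.factorial_add_eq_mul_descFactorial (a b : ℕ) :
    (a + b)! = a ! * (a + b).descFactorial b := by
  rw [← Nat.factorial_mul_descFactorial (Nat.le_add_left b a), Nat.add_sub_cancel]

theorem le_inf'_div_iff {ι : Type*} [Fintype ι] {a b : ι → ℕ} (hb : ∀ i, 0 < b i)
    (hne : (Finset.univ : Finset ι).Nonempty) (t : ℕ) :
    t ≤ Finset.univ.inf' hne (fun i => a i / b i) ↔ ∀ i, t * b i ≤ a i := by
  simp only [Finset.le_inf'_iff, Finset.mem_univ, true_implies, Nat.le_div_iff_mul_le (hb _)]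

section
variable {N M : ℕ} (n : Fin N → ℕ) (m : Fin M → ℕ) (𝒩 : Fin N → ℕ) (ℳ : Fin M → ℕ)

def lowerCoeff (s : ℕ) : ℕ := ∏ l, (𝒩 l + s * n l).descFactorial (n l)

def raiseCoeff (s : ℕ) : ℕ := ∏ k, (ℳ k - s * m k).descFactorial (m k)

theorem lowerCoeff_zero (h : ∃ l, 𝒩 l < n l) : lowerCoeff n 𝒩 0 = 0 := by
  obtain ⟨l, hl⟩ := h
  exact Finset.prod_eq_zero (Finset.mem_univ l) (by simpa using Nat.descFactorial_of_lt hl)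

theorem raiseCoeff_eq_zero {s : ℕ} (h : ∃ k, ℳ k < (s + 1) * m k) : raiseCoeff m ℳ s = 0 := by
  obtain ⟨k, hk⟩ := h
  refine Finset.prod_eq_zero (Finset.mem_univ k) (Nat.descFactorial_of_lt ?_)
  rcases Nat.eq_zero_or_pos (m k) with hk0 | hk0
  · simp [hk0] at hk
  · rw [add_one_mul] at hk
    omega

theorem normC_succ_mul_raiseCoeff {s : ℕ} (h : ∀ k, (s + 1) * m k ≤ ℳ k) :
    normC n m 𝒩 ℳ (s + 1) * raiseCoeff m ℳ s = normC n m 𝒩 ℳ s * lowerCoeff n 𝒩 (s + 1) := by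
  have hx : ∀ l, (𝒩 l + n l * (s + 1))! =
      (𝒩 l + n l * s)! * (𝒩 l + (s + 1) * n l).descFactorial (n l) := fun l => by
    rw [mul_comm (s + 1), mul_add_one, ← add_assoc, Nat.factorial_add_eq_mul_descFactorial]
  have hy : ∀ k, (ℳ k - m k * s)! =
      (ℳ k - m k * (s + 1))! * (ℳ k - s * m k).descFactorial (m k) := fun k => by
    have hk := h k
    rw [add_one_mul] at hk
    rw [mul_comm (m k) s, mul_comm (m k) (s + 1), add_one_mul, ← Nat.sub_sub]
    exact (Nat.factorial_mul_descFactorial (by omega)).symm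
  simp only [normC, lowerCoeff, raiseCoeff, hx, hy, Finset.prod_mul_distrib]
  ring

theorem offd_eq_sqrt (s : ℕ) :
    offd n m 𝒩 ℳ s = √((lowerCoeff n 𝒩 (s + 1) : ℝ) * raiseCoeff m ℳ s) := by
  rw [offd, lowerCoeff, raiseCoeff, ← Nat.cast_mul]
  congr 3
  · refine Finset.prod_congr rfl fun l _ => ?_
    rw [add_one_mul, ← add_assoc, mul_comm s, Nat.add_descFactorial_eq_ascFactorial,
      Nat.ascFactorial_eq_prod_range]
    simp only [add_right_comm _ 1]
  · refine Finset.prod_congr rfl fun k _ => ?_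
    rw [mul_comm s, Nat.descFactorial_eq_prod_range]

theorem normC_pos (s : ℕ) : 0 < normC n m 𝒩 ℳ s :=
  Nat.mul_pos (Finset.prod_pos fun _ _ => Nat.factorial_pos _)
    (Finset.prod_pos fun _ _ => Nat.factorial_pos _)

theorem H1_basisE (s : ℕ) :
    H1 n m (basisE n m 𝒩 ℳ s) = (√(normC n m 𝒩 ℳ s))⁻¹ •
      ((lowerCoeff n 𝒩 s : ℝ) •
          mon ((fun l => 𝒩 l + s * n l) - n) ((fun k => ℳ k - s * m k) + m) +
        (raiseCoeff m ℳ s : ℝ) •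
          mon ((fun l => 𝒩 l + s * n l) + n) ((fun k => ℳ k - s * m k) - m)) := by
  rw [basisE, map_smul, H1_mon]
  rfl

theorem inv_sqrt_normC_smul_lowering {t : ℕ} (h : ∀ k, (t + 1) * m k ≤ ℳ k) :
    (√(normC n m 𝒩 ℳ (t + 1)))⁻¹ • ((lowerCoeff n 𝒩 (t + 1) : ℝ) •
        mon ((fun l => 𝒩 l + (t + 1) * n l) - n) ((fun k => ℳ k - (t + 1) * m k) + m)) =
      offd n m 𝒩 ℳ t • basisE n m 𝒩 ℳ t := by
  have hx : (fun l => 𝒩 l + (t + 1) * n l) - n = fun l => 𝒩 l + t * n l := by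
    funext l
    simp only [Pi.sub_apply, add_one_mul]
    omega
  have hy : (fun k => ℳ k - (t + 1) * m k) + m = fun k => ℳ k - t * m k := by
    funext k
    have hk := h k
    simp only [Pi.add_apply, add_one_mul] at hk ⊢
    omega
  rw [hx, hy, basisE, smul_smul, smul_smul, offd_eq_sqrt, mul_comm (lowerCoeff n 𝒩 (t + 1) : ℝ)]
  congr 1
  exact inv_sqrt_mul_eq_sqrt_mul_mul_inv_sqrt (mod_cast normC_pos ..) (mod_cast normC_pos ..)
    (Nat.cast_nonneg _) (mod_cast (normC_succ_mul_raiseCoeff n m 𝒩 ℳ h).symm)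

theorem inv_sqrt_normC_smul_raising {s : ℕ} (h : ∀ k, (s + 1) * m k ≤ ℳ k) :
    (√(normC n m 𝒩 ℳ s))⁻¹ • ((raiseCoeff m ℳ s : ℝ) •
        mon ((fun l => 𝒩 l + s * n l) + n) ((fun k => ℳ k - s * m k) - m)) =
      offd n m 𝒩 ℳ s • basisE n m 𝒩 ℳ (s + 1) := by
  have hx : (fun l => 𝒩 l + s * n l) + n = fun l => 𝒩 l + (s + 1) * n l := by
    funext l
    simp only [Pi.add_apply, add_one_mul]
    omega
  have hy : (fun k => ℳ k - s * m k) - m = fun k => ℳ k - (s + 1) * m k := by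
    funext k
    simp only [Pi.sub_apply, add_one_mul]
    omega
  rw [hx, hy, basisE, smul_smul, smul_smul, offd_eq_sqrt]
  congr 1
  exact inv_sqrt_mul_eq_sqrt_mul_mul_inv_sqrt (mod_cast normC_pos ..) (mod_cast normC_pos ..)
    (Nat.cast_nonneg _) (mod_cast normC_succ_mul_raiseCoeff n m 𝒩 ℳ h)

end

theorem H1_tridiagonal_general {N M : ℕ} (hM : 1 ≤ M)
    (n : Fin N → ℕ) (m : Fin M → ℕ) (hm : ∀ k, 0 < m k)
    (𝒩 : Fin N → ℕ) (ℳ : Fin M → ℕ) (hrestr : ∃ l', 𝒩 l' < n l')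
    (r : ℕ) (hr : r = Finset.univ.inf' ⟨⟨0, hM⟩, Finset.mem_univ _⟩ fun k => ℳ k / m k) :
    ∀ s ≤ r,
      H1 n m (basisE n m 𝒩 ℳ s) =
        (if s = 0 then 0 else offd n m 𝒩 ℳ (s - 1) • basisE n m 𝒩 ℳ (s - 1)) +
          (if s = r then 0 else offd n m 𝒩 ℳ s • basisE n m 𝒩 ℳ (s + 1)) := by
  have hle : ∀ t, t ≤ r ↔ ∀ k, t * m k ≤ ℳ k := fun t => hr ▸ le_inf'_div_iff hm _ t
  intro s hs
  rw [H1_basisE, smul_add]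
  congr 1
  · rcases s with _ | t
    · simp [lowerCoeff_zero n 𝒩 hrestr]
    · rw [if_neg t.succ_ne_zero, Nat.add_sub_cancel]
      exact inv_sqrt_normC_smul_lowering n m 𝒩 ℳ ((hle _).1 hs)
  · split_ifs with hsr
    · have hlt : ∃ k, ℳ k < (s + 1) * m k := by
        simpa [hsr] using (hle (r + 1)).not.1 (by omega)
      simp [raiseCoeff_eq_zero m ℳ hlt]
    · exact inv_sqrt_normC_smul_raising n m 𝒩 ℳ ((hle _).1 (by omega))

/-- with respect to the normalized basis `e_s`, `0 ≤ s ≤ r`, the matrix of `H₁` is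
tridiagonal, symmetric, with zero diagonal and the stated off-diagonal entries:
`H₁ e_s = (H₁)_{s-1,s} e_{s-1} + (H₁)_{s+1,s} e_{s+1}`, with `(H₁)_{s,s+1} = (H₁)_{s+1,s}`
given by `offd`. -/
theorem H1_tridiagonal {N M : ℕ} (hN : 1 ≤ N) (hM : 1 ≤ M)
    (n : Fin N → ℕ) (m : Fin M → ℕ) (hn : ∀ l, 0 < n l) (hm : ∀ k, 0 < m k)
    (𝒩 : Fin N → ℕ) (ℳ : Fin M → ℕ) (hrestr : ∃ l', 𝒩 l' < n l')
    (r : ℕ) (hr : r = Finset.univ.inf' ⟨⟨0, hM⟩, Finset.mem_univ _⟩ fun k => ℳ k / m k) :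
    ∀ s ≤ r,
      H1 n m (basisE n m 𝒩 ℳ s) =
        (if s = 0 then 0 else offd n m 𝒩 ℳ (s - 1) • basisE n m 𝒩 ℳ (s - 1)) +
          (if s = r then 0 else offd n m 𝒩 ℳ s • basisE n m 𝒩 ℳ (s + 1)) :=
  H1_tridiagonal_general hM n m hm 𝒩 ℳ hrestr r hr
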